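/- There are exactly 31 subloops of T_L of cardinality 32. -/

import Mathlib

/-- Iterated Cayley–Dickson doubling starting from `ℝ`. -/
def CD : ℕ → Type
  | 0 => ℝ
  | n + 1 => CD n × CD n

instance cdAddCommGroup : ∀ n, AddCommGroup (CD n)
  | 0 => inferInstanceAs (AddCommGroup ℝ)
  | n + 1 => letI := cdAddCommGroup n; inferInstanceAs (AddCommGroup (CD n × CD n))

noncomputable instance cdModule : ∀ n, Module ℝ (CD n)
  | 0 => inferInstanceAs (Module ℝ ℝ)
  | n + 1 => letI := cdModule n; inferInstanceAs (Module ℝ (CD n × CD n))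

/-- Cayley–Dickson conjugation, starting from the identity on `ℝ`. -/
def cdConj : ∀ n, CD n → CD n
  | 0, x => x
  | n + 1, x => (cdConj n x.1, -x.2)

/-- Cayley–Dickson multiplication: `(a,b)(c,d) = (ac − d b̄, ā d + c b)`. -/
def cdMul : ∀ n, CD n → CD n → CD n
  | 0, x, y => @Mul.mul ℝ _ x y
  | n + 1, x, y =>
      (cdMul n x.1 y.1 - cdMul n y.2 (cdConj n x.2),
       cdMul n (cdConj n x.1) y.2 + cdMul n y.1 x.2)

instance cdMulInst (n : ℕ) : Mul (CD n) := ⟨cdMul n⟩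

instance cdOne : ∀ n, One (CD n)
  | 0 => ⟨(1 : ℝ)⟩
  | n + 1 => letI := cdOne n; ⟨((1 : CD n), 0)⟩

/-- The standard basis elements: under a doubling step `A → A × A`, a basis element
`e k` of `A` gives `e k = (e k, 0)` and `e (k + dim A) = (0, e k)`. -/
def cdE : ∀ n, ℕ → CD n
  | 0, _ => (1 : ℝ)
  | n + 1, k => if k < 2 ^ n then (cdE n k, 0) else (0, cdE n (k - 2 ^ n))

/-- The trigintaduonions: the 32-dimensional real Cayley–Dickson algebra. -/
abbrev TT := CD 5

/-- The 32 standard basis elements `e 0 = 1, e 1, …, e 31` of `𝕋`. -/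
def e (i : ℕ) : TT := cdE 5 i

/-- The trigintaduonion loop `T_L = {±e 0, ±e 1, …, ±e 31}`. -/
def TL : Set TT := {x | ∃ i < 32, x = e i ∨ x = -e i}

/-- A subloop of `T_L`: a nonempty subset of `T_L` closed under multiplication. -/
def IsSubloop (N : Set TT) : Prop :=
  N ⊆ TL ∧ N.Nonempty ∧ ∀ x ∈ N, ∀ y ∈ N, x * y ∈ N

/-- Two subsets of `T_L` are isomorphic (as loops) if some bijection between them
preserves multiplication. -/
def LoopIso (A B : Set TT) : Prop :=
  ∃ f : TT → TT, Set.BijOn f A B ∧ ∀ x ∈ A, ∀ y ∈ A, f (x * y) = f x * f y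

/-!
In the Cayley–Dickson algebras the standard basis multiplies like `e i * e j = ± e (i ^^^ j)`
(bitwise xor), and `e i * e i = -1` for `i ≠ 0`. A subloop of `T_L` with more than two elements
contains some `±e i` with `i ≠ 0`, hence `-1`, hence is closed under negation; so it is
`{±e i | i ∈ S}` for an xor-closed `S ⊆ range 32`. Having 32 elements means `S` has 16, i.e. `S`
is an index-two subgroup of `𝔽₂⁵`, and these are the kernels of the 31 nonzero linear functionals
`𝔽₂⁵ → 𝔽₂`.
-/

open Finset

namespace Nat

theorem two_pow_xor_eq_add {n r : ℕ} (h : r < 2 ^ n) : 2 ^ n ^^^ r = 2 ^ n + r := by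
  apply Nat.eq_of_testBit_eq
  intro k
  rw [Nat.testBit_xor, Nat.testBit_two_pow]
  rcases lt_trichotomy n k with hk | rfl | hk
  · have : 2 ^ n + r < 2 ^ k := by
      calc 2 ^ n + r < 2 ^ (n + 1) := by rw [Nat.pow_succ]; omega
        _ ≤ 2 ^ k := Nat.pow_le_pow_right (by norm_num) hk
    rw [Nat.testBit_lt_two_pow this, Nat.testBit_lt_two_pow (by omega : r < 2 ^ k)]
    simp [hk.ne]
  · simp [Nat.testBit_two_pow_add_eq, Nat.testBit_lt_two_pow h]
  · simp [Nat.testBit_two_pow_add_gt hk, hk.ne']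

theorem two_pow_add_xor {n a b : ℕ} (ha : a < 2 ^ n) (hb : b < 2 ^ n) :
    (2 ^ n + a) ^^^ b = 2 ^ n + (a ^^^ b) := by
  rw [← two_pow_xor_eq_add ha, ← two_pow_xor_eq_add (xor_lt_two_pow ha hb), Nat.xor_assoc]

theorem xor_two_pow_add {n a b : ℕ} (ha : a < 2 ^ n) (hb : b < 2 ^ n) :
    a ^^^ (2 ^ n + b) = 2 ^ n + (a ^^^ b) := by
  rw [Nat.xor_comm, two_pow_add_xor hb ha, Nat.xor_comm]

theorem two_pow_add_xor_two_pow_add {n a b : ℕ} (ha : a < 2 ^ n) (hb : b < 2 ^ n) :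
    (2 ^ n + a) ^^^ (2 ^ n + b) = a ^^^ b := by
  rw [← two_pow_xor_eq_add ha, ← two_pow_xor_eq_add hb, Nat.xor_comm (2 ^ n) a, Nat.xor_assoc,
    Nat.xor_xor_cancel_left]

theorem lt_two_pow_or_exists_two_pow_add {n i : ℕ} (h : i < 2 ^ (n + 1)) :
    i < 2 ^ n ∨ ∃ k < 2 ^ n, i = 2 ^ n + k := by
  rw [Nat.pow_succ] at h
  by_cases hi : i < 2 ^ n
  · exact Or.inl hi
  · exact Or.inr ⟨i - 2 ^ n, by omega, by omega⟩

end Nat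

/-- Reading binary digits identifies `range (2 ^ n)` with `𝔽₂ⁿ`, xor being addition; `bitDot n b`
is then the linear functional `i ↦ ⟨b, i⟩`. -/
def bitDot : ℕ → ℕ → ℕ → Bool
  | 0, _, _ => false
  | n + 1, b, i => bitDot n b i ^^ (b.testBit n && i.testBit n)

theorem bitDot_xor (n b i j : ℕ) : bitDot n b (i ^^^ j) = (bitDot n b i ^^ bitDot n b j) := by
  induction n with
  | zero => rfl
  | succ n ih =>
    simp only [bitDot, ih, Nat.testBit_xor, Bool.and_xor_distrib_left, Bool.xor_assoc,
      Bool.xor_left_comm]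

theorem bitDot_two_pow (n b k : ℕ) : bitDot n b (2 ^ k) = (decide (k < n) && b.testBit k) := by
  induction n with
  | zero => simp [bitDot]
  | succ n ih =>
    rw [bitDot, ih, Nat.testBit_two_pow]
    rcases lt_trichotomy k n with hk | rfl | hk
    · simp [hk, hk.ne, hk.trans (Nat.lt_succ_self n)]
    · simp
    · simp [hk.ne', hk.not_gt, show ¬k < n + 1 by omega]

theorem bitDot_zero_left (n i : ℕ) : bitDot n 0 i = false := by
  induction n with
  | zero => rfl
  | succ n ih => simp [bitDot, ih]

def IsXorClosed (S : Finset ℕ) : Prop := ∀ i ∈ S, ∀ j ∈ S, i ^^^ j ∈ S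

def IsXorHomOn (n : ℕ) (f : ℕ → Bool) : Prop :=
  ∀ i < 2 ^ n, ∀ j < 2 ^ n, f (i ^^^ j) = (f i ^^ f j)

def xorHyperplane (n b : ℕ) : Finset ℕ := (range (2 ^ n)).filter fun i => bitDot n b i = false

theorem isXorHomOn_bitDot (n b : ℕ) : IsXorHomOn n (bitDot n b) :=
  fun i _ j _ => bitDot_xor n b i j

theorem IsXorHomOn.map_zero {n : ℕ} {f : ℕ → Bool} (hf : IsXorHomOn n f) : f 0 = false := by
  simpa using hf 0 (Nat.two_pow_pos n) 0 (Nat.two_pow_pos n)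

theorem IsXorHomOn.of_succ {n : ℕ} {f : ℕ → Bool} (hf : IsXorHomOn (n + 1) f) : IsXorHomOn n f :=
  fun i hi j hj => hf i (hi.trans (Nat.pow_lt_pow_succ one_lt_two)) j
    (hj.trans (Nat.pow_lt_pow_succ one_lt_two))

theorem IsXorHomOn.eq_of_eq_two_pow {n : ℕ} {f g : ℕ → Bool} (hf : IsXorHomOn n f)
    (hg : IsXorHomOn n g) (h : ∀ k < n, f (2 ^ k) = g (2 ^ k)) : ∀ i < 2 ^ n, f i = g i := by
  induction n with
  | zero =>
    intro i hi
    rw [Nat.lt_one_iff.1 hi, hf.map_zero, hg.map_zero]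
  | succ n ih =>
    intro i hi
    have ih' := ih hf.of_succ hg.of_succ fun k hk => h k (hk.trans (Nat.lt_succ_self n))
    by_cases hin : i < 2 ^ n
    · exact ih' i hin
    obtain ⟨r, hr, rfl⟩ : ∃ r < 2 ^ n, i = 2 ^ n + r := ⟨i - 2 ^ n, by omega, by omega⟩
    have h2n : 2 ^ n < 2 ^ (n + 1) := Nat.pow_lt_pow_succ one_lt_two
    have hr' : r < 2 ^ (n + 1) := hr.trans h2n
    rw [← Nat.two_pow_xor_eq_add hr, hf _ h2n _ hr', hg _ h2n _ hr', h n (Nat.lt_succ_self n),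
      ih' r hr]

theorem IsXorHomOn.exists_eq_bitDot {n : ℕ} {f : ℕ → Bool} (hf : IsXorHomOn n f) :
    ∃ b < 2 ^ n, ∀ i < 2 ^ n, f i = bitDot n b i := by
  refine ⟨Nat.ofBits fun k : Fin n => f (2 ^ (k : ℕ)), Nat.ofBits_lt_two_pow _,
    hf.eq_of_eq_two_pow (isXorHomOn_bitDot n _) fun k hk => ?_⟩
  simp [bitDot_two_pow, hk, Nat.testBit_ofBits_lt _ k hk]

theorem xor_mem_iff_of_mem {S : Finset ℕ} (hS : IsXorClosed S) {i j : ℕ} (hi : i ∈ S) :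
    i ^^^ j ∈ S ↔ j ∈ S :=
  ⟨fun h => Nat.xor_xor_cancel_left i j ▸ hS i hi _ h, hS i hi j⟩

/-- The translate of `S` by an element outside it is the complement of `S`. -/
theorem xor_mem_iff_of_not_mem {n : ℕ} {S : Finset ℕ} (hS : IsXorClosed S)
    (hsub : S ⊆ range (2 ^ n)) (hcard : 2 * S.card = 2 ^ n) {i j : ℕ} (hi : i < 2 ^ n)
    (hiS : i ∉ S) (hj : j < 2 ^ n) : i ^^^ j ∈ S ↔ j ∉ S := by
  refine ⟨fun h hjS => hiS ((xor_mem_iff_of_mem hS hjS).1 (Nat.xor_comm i j ▸ h)), fun hjS => ?_⟩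
  have htrans : S.image (i ^^^ ·) = range (2 ^ n) \ S := by
    apply eq_of_subset_of_card_le
    · intro x hx
      obtain ⟨s, hs, rfl⟩ := mem_image.1 hx
      refine mem_sdiff.2 ⟨mem_range.2 (Nat.xor_lt_two_pow hi (mem_range.1 (hsub hs))), fun h => ?_⟩
      exact hiS ((xor_mem_iff_of_mem hS hs).1 (Nat.xor_comm i s ▸ h))
    · rw [card_image_of_injective _ (fun a c h => by simpa using congrArg (i ^^^ ·) h),
        card_sdiff_of_subset hsub, card_range]
      omega
  obtain ⟨s, hs, rfl⟩ := mem_image.1 (htrans ▸ mem_sdiff.2 ⟨mem_range.2 hj, hjS⟩)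
  simpa using hs

theorem xorHyperplane_zero (n : ℕ) : xorHyperplane n 0 = range (2 ^ n) := by
  simp [xorHyperplane, bitDot_zero_left]

theorem IsXorClosed.exists_eq_xorHyperplane {n : ℕ} {S : Finset ℕ} (hS : IsXorClosed S)
    (hsub : S ⊆ range (2 ^ n)) (hcard : 2 * S.card = 2 ^ n) :
    ∃ b ∈ Set.Ico 1 (2 ^ n), S = xorHyperplane n b := by
  have hχ : IsXorHomOn n fun i => decide (i ∉ S) := by
    intro i hi j hj
    by_cases hiS : i ∈ S
    · simp [hiS, xor_mem_iff_of_mem hS hiS]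
    · simp [hiS, xor_mem_iff_of_not_mem hS hsub hcard hi hiS hj]
  obtain ⟨b, hb, hχb⟩ := hχ.exists_eq_bitDot
  have hSb : S = xorHyperplane n b := by
    ext i
    by_cases hi : i < 2 ^ n
    · simp [xorHyperplane, hi, ← hχb i hi]
    · simpa [xorHyperplane, hi] using fun h => hi (mem_range.1 (hsub h))
  refine ⟨b, ⟨Nat.one_le_iff_ne_zero.2 fun hb0 => ?_, hb⟩, hSb⟩
  rw [hSb, hb0, xorHyperplane_zero, card_range] at hcard
  have := Nat.two_pow_pos n
  omega

theorem isXorClosed_xorHyperplane (n b : ℕ) : IsXorClosed (xorHyperplane n b) := by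
  intro i hi j hj
  simp only [xorHyperplane, mem_filter, mem_range] at hi hj ⊢
  exact ⟨Nat.xor_lt_two_pow hi.1 hj.1, by rw [bitDot_xor, hi.2, hj.2]; rfl⟩

/-- Translation by a vector on which the functional is nonzero swaps its kernel and the
complement. -/
theorem two_mul_card_xorHyperplane {n b : ℕ} (hb0 : b ≠ 0) (hb : b < 2 ^ n) :
    2 * (xorHyperplane n b).card = 2 ^ n := by
  obtain ⟨k, hk⟩ := Nat.exists_testBit_of_ne_zero hb0
  have hkn : k < n := by
    by_contra! h
    rw [Nat.testBit_lt_two_pow (hb.trans_le (Nat.pow_le_pow_right two_pos h))] at hk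
    exact Bool.false_ne_true hk
  have hflip : ∀ i, bitDot n b (i ^^^ 2 ^ k) = !bitDot n b i := by
    intro i
    rw [bitDot_xor, bitDot_two_pow, hk, decide_eq_true hkn, Bool.true_and, Bool.xor_true]
  have hlt : ∀ i < 2 ^ n, i ^^^ 2 ^ k < 2 ^ n := fun i hi =>
    Nat.xor_lt_two_pow hi (Nat.pow_lt_pow_right one_lt_two hkn)
  have hswap : (xorHyperplane n b).card =
      ((range (2 ^ n)).filter fun i => ¬ bitDot n b i = false).card := by
    apply card_nbij' (· ^^^ 2 ^ k) (· ^^^ 2 ^ k)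
    · intro i hi
      rw [xorHyperplane, mem_coe, mem_filter, mem_range] at hi
      simp [hlt i hi.1, hflip, hi.2]
    · intro i hi
      rw [mem_coe, mem_filter, mem_range] at hi
      simp [xorHyperplane, hlt i hi.1, hflip, hi.2]
    · intro i _; simp
    · intro i _; simp
  have := card_filter_add_card_filter_not (s := range (2 ^ n)) (fun i => bitDot n b i = false)
  rw [card_range, ← xorHyperplane, ← hswap] at this
  omega

theorem xorHyperplane_injOn (n : ℕ) : Set.InjOn (xorHyperplane n) (Set.Iio (2 ^ n)) := by
  intro b hb b' hb' h
  apply Nat.eq_of_testBit_eq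
  intro k
  by_cases hk : k < n
  · have h2k : 2 ^ k < 2 ^ n := Nat.pow_lt_pow_right one_lt_two hk
    have := congrArg (2 ^ k ∈ ·) h
    simpa [xorHyperplane, h2k, bitDot_two_pow, hk] using this
  · have hkn : n ≤ k := not_lt.1 hk
    rw [Nat.testBit_lt_two_pow ((Set.mem_Iio.1 hb).trans_le (Nat.pow_le_pow_right two_pos hkn)),
      Nat.testBit_lt_two_pow ((Set.mem_Iio.1 hb').trans_le (Nat.pow_le_pow_right two_pos hkn))]

theorem ncard_xorClosed_halves (n : ℕ) :
    {S : Finset ℕ | S ⊆ range (2 ^ n) ∧ IsXorClosed S ∧ 2 * S.card = 2 ^ n}.ncard = 2 ^ n - 1 := by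
  have : {S : Finset ℕ | S ⊆ range (2 ^ n) ∧ IsXorClosed S ∧ 2 * S.card = 2 ^ n} =
      xorHyperplane n '' Set.Ico 1 (2 ^ n) := by
    ext S
    constructor
    · rintro ⟨hsub, hS, hcard⟩
      obtain ⟨b, hb, rfl⟩ := hS.exists_eq_xorHyperplane hsub hcard
      exact ⟨b, hb, rfl⟩
    · rintro ⟨b, ⟨hb1, hb⟩, rfl⟩
      exact ⟨filter_subset _ _, isXorClosed_xorHyperplane n b,
        two_mul_card_xorHyperplane (by omega) hb⟩
  rw [this, ((xorHyperplane_injOn n).mono Set.Ico_subset_Iio_self).ncard_image,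
    ← coe_Ico, Set.ncard_coe_finset, Nat.card_Ico]

namespace CD

variable {n : ℕ}

def mk (a b : CD n) : CD (n + 1) := (a, b)

theorem mk_fst_snd (x : CD (n + 1)) : mk x.1 x.2 = x := rfl

theorem mk_inj {a b c d : CD n} : mk a b = mk c d ↔ a = c ∧ b = d := Prod.ext_iff

theorem zero_def : (0 : CD (n + 1)) = mk 0 0 := rfl

theorem one_def : (1 : CD (n + 1)) = mk 1 0 := rfl

@[simp] theorem neg_mk (a b : CD n) : -mk a b = mk (-a) (-b) := rfl

@[simp] theorem conj_mk (a b : CD n) : cdConj (n + 1) (mk a b) = mk (cdConj n a) (-b) := rfl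

@[simp] theorem mk_mul_mk (a b c d : CD n) :
    mk a b * mk c d = mk (a * c - d * cdConj n b) (cdConj n a * d + c * b) := rfl

@[simp] theorem conj_zero : ∀ n, cdConj n (0 : CD n) = 0
  | 0 => rfl
  | n + 1 => by rw [zero_def, conj_mk, conj_zero n, neg_zero]

@[simp] theorem conj_one : ∀ n, cdConj n (1 : CD n) = 1
  | 0 => rfl
  | n + 1 => by rw [one_def, conj_mk, conj_one n, neg_zero]

theorem conj_neg : ∀ n (x : CD n), cdConj n (-x) = -cdConj n x
  | 0, _ => rfl
  | n + 1, x => by rw [← mk_fst_snd x]; simp [conj_neg n]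

mutual

@[simp] protected theorem mul_zero : ∀ {n} (x : CD n), x * 0 = 0
  | 0, x => mul_zero (M₀ := ℝ) x
  | n + 1, x => by rw [← mk_fst_snd x, zero_def]; simp [CD.mul_zero, CD.zero_mul]

@[simp] protected theorem zero_mul : ∀ {n} (x : CD n), 0 * x = 0
  | 0, x => zero_mul (M₀ := ℝ) x
  | n + 1, x => by rw [← mk_fst_snd x, zero_def]; simp [CD.mul_zero, CD.zero_mul]

end

mutual

protected theorem neg_mul : ∀ {n} (x y : CD n), -x * y = -(x * y)
  | 0, x, y => neg_mul (α := ℝ) x y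
  | n + 1, x, y => by
    rw [← mk_fst_snd x, ← mk_fst_snd y]
    simp only [neg_mk, mk_mul_mk, conj_neg, CD.neg_mul, CD.mul_neg, mk_inj]
    constructor <;> abel

protected theorem mul_neg : ∀ {n} (x y : CD n), x * -y = -(x * y)
  | 0, x, y => mul_neg (α := ℝ) x y
  | n + 1, x, y => by
    rw [← mk_fst_snd x, ← mk_fst_snd y]
    simp only [neg_mk, mk_mul_mk, CD.neg_mul, CD.mul_neg, mk_inj]
    constructor <;> abel

end

@[simp] protected theorem one_mul : ∀ {n} (x : CD n), 1 * x = x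
  | 0, x => one_mul (M := ℝ) x
  | n + 1, x => by rw [← mk_fst_snd x, one_def]; simp [CD.one_mul]

theorem cdE_succ_of_lt {k : ℕ} (h : k < 2 ^ n) : cdE (n + 1) k = mk (cdE n k) 0 :=
  if_pos h

theorem cdE_succ_two_pow_add (k : ℕ) : cdE (n + 1) (2 ^ n + k) = mk 0 (cdE n k) := by
  have : cdE (n + 1) (2 ^ n + k) = mk 0 (cdE n (2 ^ n + k - 2 ^ n)) := if_neg (by omega)
  rwa [Nat.add_sub_cancel_left] at this

theorem cdE_zero : ∀ n, cdE n 0 = 1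
  | 0 => rfl
  | n + 1 => by rw [cdE_succ_of_lt (Nat.two_pow_pos n), cdE_zero n, one_def]

theorem cdE_ne_zero : ∀ n i, cdE n i ≠ 0
  | 0, _ => one_ne_zero (α := ℝ)
  | n + 1, i => by
    by_cases h : i < 2 ^ n
    · simp [cdE_succ_of_lt h, zero_def, mk_inj, cdE_ne_zero n i]
    · obtain ⟨k, rfl⟩ := Nat.exists_eq_add_of_le (not_lt.1 h)
      simp [cdE_succ_two_pow_add, zero_def, mk_inj, cdE_ne_zero n k]

theorem cdE_ne_neg_cdE : ∀ n i j, cdE n i ≠ -cdE n j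
  | 0, _, _ => show (1 : ℝ) ≠ -1 by norm_num
  | n + 1, i, j => by
    rcases lt_or_ge i (2 ^ n) with hi | hi <;> rcases lt_or_ge j (2 ^ n) with hj | hj
    · simp [cdE_succ_of_lt hi, cdE_succ_of_lt hj, mk_inj, cdE_ne_neg_cdE n i j]
    · obtain ⟨j, rfl⟩ := Nat.exists_eq_add_of_le hj
      simp [cdE_succ_of_lt hi, cdE_succ_two_pow_add, mk_inj, cdE_ne_zero n i]
    · obtain ⟨i, rfl⟩ := Nat.exists_eq_add_of_le hi
      simp [cdE_succ_of_lt hj, cdE_succ_two_pow_add, mk_inj, cdE_ne_zero n i]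
    · obtain ⟨i, rfl⟩ := Nat.exists_eq_add_of_le hi
      obtain ⟨j, rfl⟩ := Nat.exists_eq_add_of_le hj
      simp [cdE_succ_two_pow_add, mk_inj, cdE_ne_neg_cdE n i j]

theorem cdE_injOn : ∀ n, Set.InjOn (cdE n) (Set.Iio (2 ^ n))
  | 0, i, hi, j, hj, _ => by simp_all
  | n + 1, i, hi, j, hj, h => by
    rcases Nat.lt_two_pow_or_exists_two_pow_add hi with hi' | ⟨i', hi', rfl⟩ <;>
      rcases Nat.lt_two_pow_or_exists_two_pow_add hj with hj' | ⟨j', hj', rfl⟩ <;>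
      simp only [cdE_succ_of_lt, cdE_succ_two_pow_add, hi', hj', mk_inj] at h
    · exact cdE_injOn n hi' hj' h.1
    · exact absurd h.1 (cdE_ne_zero n i)
    · exact absurd h.1.symm (cdE_ne_zero n j)
    · rw [cdE_injOn n hi' hj' h.2]

theorem conj_cdE : ∀ {n i}, 0 < i → i < 2 ^ n → cdConj n (cdE n i) = -cdE n i
  | 0, _, h0, hi => by rw [pow_zero] at hi; omega
  | n + 1, i, h0, hi => by
    rcases Nat.lt_two_pow_or_exists_two_pow_add hi with hi' | ⟨i', -, rfl⟩
    · simp [cdE_succ_of_lt hi', conj_cdE h0 hi']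
    · simp [cdE_succ_two_pow_add]

theorem conj_cdE_eq_or {i : ℕ} (hi : i < 2 ^ n) :
    cdConj n (cdE n i) = cdE n i ∨ cdConj n (cdE n i) = -cdE n i := by
  rcases Nat.eq_zero_or_pos i with rfl | h0
  · simp [cdE_zero]
  · exact Or.inr (conj_cdE h0 hi)

theorem cdE_mul_self : ∀ {n i}, 0 < i → i < 2 ^ n → cdE n i * cdE n i = -1
  | 0, _, h0, hi => by rw [pow_zero] at hi; omega
  | n + 1, i, h0, hi => by
    rcases Nat.lt_two_pow_or_exists_two_pow_add hi with hi' | ⟨i', hi', rfl⟩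
    · simp [cdE_succ_of_lt hi', cdE_mul_self h0 hi', one_def]
    · rw [cdE_succ_two_pow_add]
      rcases Nat.eq_zero_or_pos i' with rfl | hi0
      · simp [cdE_zero, one_def]
      · simp [conj_cdE hi0 hi', CD.mul_neg, cdE_mul_self hi0 hi', one_def]

theorem cdE_mul_cdE : ∀ {n i j}, i < 2 ^ n → j < 2 ^ n →
    cdE n i * cdE n j = cdE n (i ^^^ j) ∨ cdE n i * cdE n j = -cdE n (i ^^^ j)
  | 0, _, _, _, _ => Or.inl (mul_one (M := ℝ) 1)
  | n + 1, i, j, hi, hj => by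
    rcases Nat.lt_two_pow_or_exists_two_pow_add hi with hi' | ⟨i', hi', rfl⟩ <;>
      rcases Nat.lt_two_pow_or_exists_two_pow_add hj with hj' | ⟨j', hj', rfl⟩
    · rw [cdE_succ_of_lt hi', cdE_succ_of_lt hj', cdE_succ_of_lt (Nat.xor_lt_two_pow hi' hj')]
      simpa [mk_inj] using cdE_mul_cdE hi' hj'
    · rw [cdE_succ_of_lt hi', cdE_succ_two_pow_add, Nat.xor_two_pow_add hi' hj',
        cdE_succ_two_pow_add]
      rcases conj_cdE_eq_or hi' with h | h <;>
        simpa [mk_inj, h, CD.neg_mul, neg_eq_iff_eq_neg, or_comm] using cdE_mul_cdE hi' hj'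
    · rw [cdE_succ_two_pow_add, cdE_succ_of_lt hj', Nat.two_pow_add_xor hi' hj',
        cdE_succ_two_pow_add, Nat.xor_comm]
      simpa [mk_inj] using cdE_mul_cdE hj' hi'
    · rw [cdE_succ_two_pow_add, cdE_succ_two_pow_add, Nat.two_pow_add_xor_two_pow_add hi' hj',
        cdE_succ_of_lt (Nat.xor_lt_two_pow hi' hj'), Nat.xor_comm]
      rcases conj_cdE_eq_or hi' with h | h <;>
        simpa [mk_inj, h, CD.mul_neg, neg_eq_iff_eq_neg, or_comm] using cdE_mul_cdE hj' hi'

end CD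

theorem e_zero : e 0 = 1 := CD.cdE_zero 5

theorem e_mul_self {i : ℕ} (h0 : 0 < i) (hi : i < 32) : e i * e i = -1 := CD.cdE_mul_self h0 hi

theorem e_mul_e {i j : ℕ} (hi : i < 32) (hj : j < 32) :
    e i * e j = e (i ^^^ j) ∨ e i * e j = -e (i ^^^ j) :=
  CD.cdE_mul_cdE hi hj

theorem e_injOn : Set.InjOn e (Set.Iio 32) := CD.cdE_injOn 5

theorem e_ne_neg_e (i j : ℕ) : e i ≠ -e j := CD.cdE_ne_neg_cdE 5 i j

theorem xor_lt_32 {i j : ℕ} (hi : i < 32) (hj : j < 32) : i ^^^ j < 32 :=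
  Nat.xor_lt_two_pow (n := 5) hi hj

def signedBasis (S : Finset ℕ) : Set TT := e '' ↑S ∪ (fun i => -e i) '' ↑S

theorem mem_signedBasis {S : Finset ℕ} {x : TT} :
    x ∈ signedBasis S ↔ ∃ i ∈ S, x = e i ∨ x = -e i := by
  simp only [signedBasis, Set.mem_union, Set.mem_image, mem_coe]
  constructor
  · rintro (⟨i, hi, rfl⟩ | ⟨i, hi, rfl⟩)
    exacts [⟨i, hi, Or.inl rfl⟩, ⟨i, hi, Or.inr rfl⟩]
  · rintro ⟨i, hi, rfl | rfl⟩
    exacts [Or.inl ⟨i, hi, rfl⟩, Or.inr ⟨i, hi, rfl⟩]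

theorem e_mem_signedBasis {S : Finset ℕ} (hS : S ⊆ range 32) {i : ℕ} (hi : i < 32) :
    e i ∈ signedBasis S ↔ i ∈ S := by
  refine ⟨fun h => ?_, fun h => mem_signedBasis.2 ⟨i, h, Or.inl rfl⟩⟩
  obtain ⟨j, hj, h | h⟩ := mem_signedBasis.1 h
  · rwa [e_injOn hi (mem_range.1 (hS hj)) h]
  · exact absurd h (e_ne_neg_e i j)

theorem ncard_signedBasis {S : Finset ℕ} (hS : S ⊆ range 32) :
    (signedBasis S).ncard = 2 * S.card := by
  have hinj : Set.InjOn e ↑S := e_injOn.mono fun i hi => mem_range.1 (hS hi)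
  rw [signedBasis, Set.ncard_union_eq, hinj.ncard_image,
    Set.InjOn.ncard_image (f := fun i => -e i) (neg_injective.comp_injOn hinj),
    Set.ncard_coe_finset, two_mul]
  rw [Set.disjoint_left]
  rintro _ ⟨i, -, rfl⟩ ⟨j, -, h⟩
  exact e_ne_neg_e i j h.symm

theorem signedBasis_injOn : Set.InjOn signedBasis {S | S ⊆ range 32} := by
  intro S hS T hT h
  ext i
  by_cases hi : i < 32
  · rw [← e_mem_signedBasis hS hi, ← e_mem_signedBasis hT hi, h]
  · exact iff_of_false (fun h => hi (mem_range.1 (hS h))) fun h => hi (mem_range.1 (hT h))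

theorem isSubloop_signedBasis {S : Finset ℕ} (hS : S ⊆ range 32) (hxor : IsXorClosed S)
    (hne : S.Nonempty) : IsSubloop (signedBasis S) := by
  refine ⟨fun x hx => ?_, ?_, fun x hx y hy => ?_⟩
  · obtain ⟨i, hi, hx⟩ := mem_signedBasis.1 hx
    exact ⟨i, mem_range.1 (hS hi), hx⟩
  · obtain ⟨i, hi⟩ := hne
    exact ⟨e i, mem_signedBasis.2 ⟨i, hi, Or.inl rfl⟩⟩
  · obtain ⟨i, hi, hx⟩ := mem_signedBasis.1 hx
    obtain ⟨j, hj, hy⟩ := mem_signedBasis.1 hy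
    refine mem_signedBasis.2 ⟨i ^^^ j, hxor i hi j hj, ?_⟩
    rcases hx with rfl | rfl <;> rcases hy with rfl | rfl <;>
      rcases e_mul_e (mem_range.1 (hS hi)) (mem_range.1 (hS hj)) with h | h <;>
      simp [h, CD.neg_mul, CD.mul_neg]

theorem IsSubloop.neg_one_mem {N : Set TT} (hN : IsSubloop N) (hcard : 2 < N.ncard) :
    -1 ∈ N := by
  have hpair : ({1, -1} : Set TT).ncard < N.ncard :=
    (Set.ncard_insert_le 1 {-1}).trans_lt (by simpa using hcard)
  obtain ⟨x, hxN, hx⟩ := Set.exists_mem_notMem_of_ncard_lt_ncard hpair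
  obtain ⟨i, hi, hxi⟩ := hN.1 hxN
  have hsq : x * x = e i * e i := by
    rcases hxi with rfl | rfl <;> simp [CD.neg_mul, CD.mul_neg]
  have h0 : 0 < i := Nat.pos_of_ne_zero fun h => hx <| by
    rcases hxi with rfl | rfl <;> simp [h, e_zero]
  rw [← e_mul_self h0 hi, ← hsq]
  exact hN.2.2 x hxN x hxN

theorem IsSubloop.neg_mem {N : Set TT} (hN : IsSubloop N) (h1 : -1 ∈ N) {x : TT} (hx : x ∈ N) :
    -x ∈ N := by
  simpa [CD.neg_mul] using hN.2.2 _ h1 _ hx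

theorem IsSubloop.exists_eq_signedBasis {N : Set TT} (hN : IsSubloop N) (hcard : 2 < N.ncard) :
    ∃ S ⊆ range 32, IsXorClosed S ∧ N = signedBasis S := by
  classical
  have h1 := hN.neg_one_mem hcard
  have hneg : ∀ {i}, e i ∈ N ↔ -e i ∈ N := fun {i} =>
    ⟨hN.neg_mem h1, fun h => neg_neg (e i) ▸ hN.neg_mem h1 h⟩
  refine ⟨(range 32).filter (e · ∈ N), filter_subset _ _, fun i hi j hj => ?_, ?_⟩
  · simp only [mem_filter, mem_range] at hi hj ⊢
    refine ⟨xor_lt_32 hi.1 hj.1, ?_⟩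
    have hmul := hN.2.2 _ hi.2 _ hj.2
    rcases e_mul_e hi.1 hj.1 with h | h
    · rwa [← h]
    · rwa [hneg, ← h]
  · ext x
    rw [mem_signedBasis]
    constructor
    · intro hx
      obtain ⟨i, hi, hxi⟩ := hN.1 hx
      refine ⟨i, mem_filter.2 ⟨mem_range.2 hi, ?_⟩, hxi⟩
      rcases hxi with rfl | rfl
      exacts [hx, hneg.2 hx]
    · rintro ⟨i, hi, rfl | rfl⟩
      exacts [(mem_filter.1 hi).2, hneg.1 (mem_filter.1 hi).2]

/-- There are exactly 31 subloops of `T_L` of cardinality 32. -/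
theorem stmt2 : {N : Set TT | IsSubloop N ∧ N.ncard = 32}.ncard = 31 := by
  have hhalves : {N : Set TT | IsSubloop N ∧ N.ncard = 32} =
      signedBasis '' {S : Finset ℕ | S ⊆ range (2 ^ 5) ∧ IsXorClosed S ∧ 2 * S.card = 2 ^ 5} := by
    ext N
    constructor
    · rintro ⟨hN, hcard⟩
      obtain ⟨S, hS, hxor, rfl⟩ := hN.exists_eq_signedBasis (by omega)
      exact ⟨S, ⟨hS, hxor, by rw [← ncard_signedBasis hS, hcard]; rfl⟩, rfl⟩
    · rintro ⟨S, ⟨hS, hxor, hcard⟩, rfl⟩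
      refine ⟨isSubloop_signedBasis hS hxor (card_pos.1 (by omega)), ?_⟩
      rw [ncard_signedBasis hS, hcard]; rfl
  rw [hhalves, (signedBasis_injOn.mono fun S hS => hS.1).ncard_image, ncard_xorClosed_halves]
  rfl
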